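/- For a profinite group G and finite discrete G-sets A and B, the hom set Span_{G}(A,B) in the Burnside category of G is isomorphic to the filtered colimit over open normal subgroups N of G of the hom sets Span_{G/N}(A,B) in the Burnside categories of the finite quotients, where the colimit maps are induced by inflation. -/

import Mathlib

open MulAction

/-- A finite discrete `G`-set: a finite set with a `G`-action all of whose point
stabilisers are open subgroups of `G`. -/
structure FinDiscGSet (G : Type) [Group G] [TopologicalSpace G] : Type 1 where
  carrier : Type
  [fintype : Fintype carrier]
  [action : MulAction G carrier]
  isOpen_stabilizer : ∀ a : carrier, IsOpen ((MulAction.stabilizer G a : Subgroup G) : Set G)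

attribute [instance] FinDiscGSet.fintype FinDiscGSet.action

namespace FinDiscGSet

variable {G : Type} [Group G] [TopologicalSpace G]

/-- Equivariant bijections between finite discrete `G`-sets. -/
def EqvIso (A B : FinDiscGSet G) : Type :=
  {e : A.carrier ≃ B.carrier // ∀ (g : G) (a : A.carrier), e (g • a) = g • e a}

end FinDiscGSet

/-- A span of finite discrete `G`-sets from `A` to `B`: a pair of equivariant maps
`A ← M → B`. -/
structure PreSpan {G : Type} [Group G] [TopologicalSpace G]
    (A B : FinDiscGSet G) : Type 1 where
  mid : FinDiscGSet G
  left : mid.carrier → A.carrier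
  right : mid.carrier → B.carrier
  left_equivariant : ∀ (g : G) (x : mid.carrier), left (g • x) = g • left x
  right_equivariant : ∀ (g : G) (x : mid.carrier), right (g • x) = g • right x

namespace PreSpan

variable {G : Type} [Group G] [TopologicalSpace G] {A B C D : FinDiscGSet G}

/-- Two spans are equivalent if there is an equivariant isomorphism of the middle
objects commuting with both legs. -/
def Equiv (s t : PreSpan A B) : Prop :=
  ∃ e : FinDiscGSet.EqvIso s.mid t.mid,
    (∀ x, t.left (e.1 x) = s.left x) ∧ (∀ x, t.right (e.1 x) = s.right x)

/-- The carrier of the pullback of two spans. -/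
abbrev pbCarrier (s : PreSpan A B) (t : PreSpan B C) : Type :=
  {p : s.mid.carrier × t.mid.carrier // s.right p.1 = t.left p.2}

noncomputable instance (s : PreSpan A B) (t : PreSpan B C) : Fintype (pbCarrier s t) := by
  classical exact Subtype.fintype _

instance (s : PreSpan A B) (t : PreSpan B C) : MulAction G (pbCarrier s t) where
  smul := fun g p =>
    ⟨(g • p.1.1, g • p.1.2), by rw [s.right_equivariant, t.left_equivariant, p.2]⟩
  one_smul := by
    rintro ⟨⟨x, y⟩, h⟩
    exact Subtype.ext (Prod.ext (one_smul G x) (one_smul G y))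
  mul_smul := by
    rintro g h ⟨⟨x, y⟩, hxy⟩
    exact Subtype.ext (Prod.ext (mul_smul g h x) (mul_smul g h y))

/-- The pullback of two spans, as a finite discrete `G`-set. -/
noncomputable def pbSet (s : PreSpan A B) (t : PreSpan B C) : FinDiscGSet G where
  carrier := pbCarrier s t
  isOpen_stabilizer := by
    rintro ⟨⟨x, y⟩, hxy⟩
    have : ((MulAction.stabilizer G
          (⟨(x, y), hxy⟩ : pbCarrier s t) : Subgroup G) : Set G) =
        ((MulAction.stabilizer G x : Subgroup G) : Set G) ∩
          ((MulAction.stabilizer G y : Subgroup G) : Set G) := by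
      ext g
      simp only [SetLike.mem_coe, MulAction.mem_stabilizer_iff, Set.mem_inter_iff]
      constructor
      · intro h
        have := congrArg Subtype.val h
        exact ⟨congrArg Prod.fst this, congrArg Prod.snd this⟩
      · rintro ⟨h1, h2⟩
        apply Subtype.ext
        show (g • x, g • y) = (x, y)
        rw [h1, h2]
    rw [this]
    exact (s.mid.isOpen_stabilizer x).inter (t.mid.isOpen_stabilizer y)

/-- Composition of spans by pullback. -/
noncomputable def comp (s : PreSpan A B) (t : PreSpan B C) : PreSpan A C where
  mid := pbSet s t
  left := fun p => s.left p.1.1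
  right := fun p => t.right p.1.2
  left_equivariant := by rintro g ⟨⟨x, y⟩, h⟩; exact s.left_equivariant g x
  right_equivariant := by rintro g ⟨⟨x, y⟩, h⟩; exact t.right_equivariant g y

/-- Disjoint union of spans. -/
def add (s t : PreSpan A B) : PreSpan A B where
  mid :=
    { carrier := s.mid.carrier ⊕ t.mid.carrier
      action :=
        { smul := fun g x => Sum.map (fun a => g • a) (fun b => g • b) x
          one_smul := by rintro (a | b) <;> simp [Sum.map]
          mul_smul := by intro g h x; rcases x with a | b <;> simp [Sum.map, mul_smul] }
      isOpen_stabilizer := by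
        rintro (a | b)
        · convert s.mid.isOpen_stabilizer a using 2
          ext g
          simp [MulAction.mem_stabilizer_iff]
        · convert t.mid.isOpen_stabilizer b using 2
          ext g
          simp [MulAction.mem_stabilizer_iff] }
  left := Sum.elim s.left t.left
  right := Sum.elim s.right t.right
  left_equivariant := by rintro g (x | x) <;> simp [Sum.map, s.left_equivariant, t.left_equivariant]
  right_equivariant := by
    rintro g (x | x) <;> simp [Sum.map, s.right_equivariant, t.right_equivariant]

/-- The empty span. -/
def emptySpan (A B : FinDiscGSet G) : PreSpan A B where
  mid :=
    { carrier := Empty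
      action :=
        { smul := fun _ x => x.elim
          one_smul := by rintro ⟨⟩
          mul_smul := by rintro _ _ ⟨⟩ }
      isOpen_stabilizer := by rintro ⟨⟩ }
  left := fun x => x.elim
  right := fun x => x.elim
  left_equivariant := by rintro _ ⟨⟩
  right_equivariant := by rintro _ ⟨⟩

end PreSpan

/-- The relation defining the Grothendieck group (group completion) of the monoid of
equivalence classes of spans under disjoint union: a hom in the Burnside category is a
formal difference of span classes. -/
def GrothRel {G : Type} [Group G] [TopologicalSpace G] (A B : FinDiscGSet G)
    (p q : PreSpan A B × PreSpan A B) : Prop :=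
  ∃ u : PreSpan A B, PreSpan.Equiv ((p.1.add q.2).add u) ((q.1.add p.2).add u)

/-- The hom set `Span_G(A, B)` of the Burnside category: the Grothendieck group of
equivalence classes of spans from `A` to `B`, realised as a quotient of pairs of spans
(formal differences). -/
def SpanHom {G : Type} [Group G] [TopologicalSpace G] (A B : FinDiscGSet G) : Type 1 :=
  Quot (GrothRel A B)

/-- The class of a single span in the Burnside category hom set. -/
def SpanHom.ofSpan {G : Type} [Group G] [TopologicalSpace G] {A B : FinDiscGSet G}
    (s : PreSpan A B) : SpanHom A B :=
  Quot.mk _ (s, PreSpan.emptySpan A B)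

/-- A finite discrete `G`-set on which an open normal subgroup `N` acts trivially
descends to a finite discrete `G ⧸ N`-set. -/
def FinDiscGSet.descend {G : Type} [Group G] [TopologicalSpace G] [IsTopologicalGroup G]
    (N : OpenNormalSubgroup G) (X : FinDiscGSet G)
    (hX : ∀ n : G, n ∈ N → ∀ x : X.carrier, n • x = x) :
    FinDiscGSet (G ⧸ (N : Subgroup G)) where
  carrier := X.carrier
  action :=
    { smul := fun q x =>
        Quotient.liftOn' q (fun g => g • x) (by
          intro a b hab
          have hmem : a⁻¹ * b ∈ (N : Subgroup G) := QuotientGroup.leftRel_apply.mp hab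
          have h2 : (a⁻¹ * b) • x = x := hX _ hmem x
          calc a • x = a • ((a⁻¹ * b) • x) := by rw [h2]
            _ = (a * (a⁻¹ * b)) • x := (mul_smul _ _ _).symm
            _ = b • x := by rw [mul_inv_cancel_left])
      one_smul := by
        intro x
        change (1 : G) • x = x
        exact one_smul G x
      mul_smul := by
        intro q1 q2 x
        refine Quotient.inductionOn₂' q1 q2 ?_
        intro g1 g2
        change (g1 * g2) • x = g1 • (g2 • x)
        exact mul_smul g1 g2 x }
  isOpen_stabilizer := by
    intro a
    rw [← (isQuotientMap_quotient_mk').isOpen_preimage]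
    convert X.isOpen_stabilizer a using 1
    rfl

/-- Inflation of a finite discrete `G ⧸ N`-set to a finite discrete `G`-set. -/
def FinDiscGSet.inflate {G : Type} [Group G] [TopologicalSpace G] [IsTopologicalGroup G]
    (N : OpenNormalSubgroup G) (X : FinDiscGSet (G ⧸ (N : Subgroup G))) :
    FinDiscGSet G where
  carrier := X.carrier
  action := MulAction.compHom X.carrier (QuotientGroup.mk' (N : Subgroup G))
  isOpen_stabilizer := by
    intro a
    letI := MulAction.compHom X.carrier (QuotientGroup.mk' (N : Subgroup G))
    have : ((MulAction.stabilizer G a : Subgroup G) : Set G) =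
        (QuotientGroup.mk' (N : Subgroup G)) ⁻¹'
          ((MulAction.stabilizer (G ⧸ (N : Subgroup G)) a : Subgroup _) : Set _) := by
      ext g
      simp only [Set.mem_preimage, SetLike.mem_coe, MulAction.mem_stabilizer_iff]
      rfl
    rw [this]
    exact (continuous_quotient_mk').isOpen_preimage _ (X.isOpen_stabilizer a)

/-- Inflation of spans: a span of `G ⧸ N`-sets between the descents of `A` and `B`
gives a span of `G`-sets between `A` and `B`. -/
def PreSpan.inflateSpan {G : Type} [Group G] [TopologicalSpace G] [IsTopologicalGroup G]
    (N : OpenNormalSubgroup G) {A B : FinDiscGSet G}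
    (hA : ∀ n : G, n ∈ N → ∀ a : A.carrier, n • a = a)
    (hB : ∀ n : G, n ∈ N → ∀ b : B.carrier, n • b = b)
    (s : PreSpan (A.descend N hA) (B.descend N hB)) : PreSpan A B where
  mid := FinDiscGSet.inflate N s.mid
  left := s.left
  right := s.right
  left_equivariant := fun g x => s.left_equivariant (QuotientGroup.mk' (N : Subgroup G) g) x
  right_equivariant := fun g x => s.right_equivariant (QuotientGroup.mk' (N : Subgroup G) g) x


/-!
Inflation along `G → G ⧸ N` identifies `G ⧸ N`-spans with `G`-spans whose middle object is
fixed by `N`, and an equivariant isomorphism between two such spans is the same over `G` and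
over `G ⧸ N`. Every `G`-span descends to `G ⧸ N` once `N` lies in the kernels of the actions on
`A`, `B` and the middle object; these kernels are open because the sets are finite with open
stabilisers. This gives joint surjectivity.

Injectivity needs the relation defining the group completion to hold without an auxiliary
summand, i.e. that spans cancel: `s ⊔ u ≅ t ⊔ u` implies `s ≅ t`. Given a bijection
`S ⊕ U ≃ T ⊕ U` with `U` finite, send `x ∈ S` to the first point of `T` reached by bouncing
through `U`. Injectivity and finiteness make this terminate, and the resulting bijection
`S ≃ T` is natural, hence equivariant and compatible with the legs.
-/

namespace SumCancel

open Function

variable {S T U : Type*}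

def step (f : S ⊕ U → T ⊕ U) : T ⊕ U → T ⊕ U
  | .inl y => .inl y
  | .inr u => f (.inr u)

def Reaches (f : S ⊕ U → T ⊕ U) (z : T ⊕ U) (y : T) : Prop :=
  ∃ n, (step f)^[n] z = .inl y

variable {f : S ⊕ U → T ⊕ U}

theorem iterate_step_inl (n : ℕ) (y : T) : (step f)^[n] (.inl y) = .inl y :=
  iterate_fixed rfl n

theorem Reaches.unique {z : T ⊕ U} {y y' : T} (h : Reaches f z y) (h' : Reaches f z y') :
    y = y' := by
  obtain ⟨n, hn⟩ := h
  obtain ⟨m, hm⟩ := h'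
  wlog hle : n ≤ m generalizing n m y y'
  · exact (this m hm n hn (le_of_not_ge hle)).symm
  obtain ⟨k, rfl⟩ := Nat.exists_eq_add_of_le hle
  rw [Nat.add_comm, iterate_add_apply, hn, iterate_step_inl] at hm
  exact Sum.inl.inj hm

theorem injective_of_chain (hf : Injective f) {x : S} {u : ℕ → U}
    (h₀ : f (.inl x) = .inr (u 0)) (hsucc : ∀ n, f (.inr (u n)) = .inr (u (n + 1))) :
    Injective u := by
  intro i j hij
  induction i generalizing j with
  | zero =>
    cases j with
    | zero => rfl
    | succ j => cases hf (h₀.trans (hij ▸ hsucc j).symm)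
  | succ i ih =>
    cases j with
    | zero => cases hf (h₀.trans (hij ▸ hsucc i).symm)
    | succ j => rw [ih (Sum.inr.inj (hf ((hsucc i).trans (hij ▸ hsucc j).symm)))]

theorem exists_reaches [Finite U] (hf : Injective f) (x : S) :
    ∃ y, Reaches f (f (.inl x)) y := by
  by_contra! hnone
  have hinr : ∀ n, ∃ u, (step f)^[n] (f (.inl x)) = .inr u := by
    intro n
    cases hz : (step f)^[n] (f (.inl x)) with
    | inl y => exact (hnone y ⟨n, hz⟩).elim
    | inr u => exact ⟨u, rfl⟩
  choose u hu using hinr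
  refine not_injective_infinite_finite u (injective_of_chain hf (hu 0) fun n => ?_)
  rw [← hu (n + 1), iterate_succ_apply', hu n]
  rfl

theorem reaches_symm (e : S ⊕ U ≃ T ⊕ U) {x : S} {y : T} (h : Reaches e (e (.inl x)) y) :
    Reaches e.symm (e.symm (.inl y)) x := by
  suffices ∀ n (w : S ⊕ U), (step e)^[n] (e w) = .inl y →
      ∃ m, (step e.symm)^[m] (e.symm (.inl y)) = w from
    this _ _ h.choose_spec
  intro n
  induction n with
  | zero =>
    intro w hw
    rw [iterate_zero_apply] at hw
    exact ⟨0, by rw [iterate_zero_apply, ← hw, Equiv.symm_apply_apply]⟩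
  | succ n ih =>
    intro w hw
    cases hew : e w with
    | inl y' =>
      rw [hew, iterate_step_inl, Sum.inl.injEq] at hw
      exact ⟨0, by rw [iterate_zero_apply, ← hw, ← hew, Equiv.symm_apply_apply]⟩
    | inr u =>
      rw [hew, iterate_succ_apply] at hw
      obtain ⟨m, hm⟩ := ih (.inr u) hw
      refine ⟨m + 1, ?_⟩
      rw [iterate_succ_apply', hm]
      change e.symm (.inr u) = w
      rw [← hew, Equiv.symm_apply_apply]

variable [Finite U] (e : S ⊕ U ≃ T ⊕ U)

noncomputable def toFun (x : S) : T :=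
  (exists_reaches e.injective x).choose

theorem reaches_toFun (x : S) : Reaches e (e (.inl x)) (toFun e x) :=
  (exists_reaches e.injective x).choose_spec

theorem toFun_eq {x : S} {y : T} (h : Reaches e (e (.inl x)) y) : toFun e x = y :=
  (reaches_toFun e x).unique h

noncomputable def equiv : S ≃ T where
  toFun := toFun e
  invFun := toFun e.symm
  left_inv x := toFun_eq e.symm (reaches_symm e (reaches_toFun e x))
  right_inv y := toFun_eq e (by simpa using reaches_symm e.symm (reaches_toFun e.symm y))

theorem equiv_map (α : S → S) (β : T → T) (υ : U → U)
    (h : ∀ z, e (Sum.map α υ z) = Sum.map β υ (e z)) (x : S) :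
    equiv e (α x) = β (equiv e x) := by
  have hstep : Semiconj (Sum.map β υ) (step e) (step e) := by
    rintro (y | u)
    · rfl
    · exact (h (.inr u)).symm
  obtain ⟨n, hn⟩ := reaches_toFun e x
  refine toFun_eq e ⟨n, ?_⟩
  rw [show e (.inl (α x)) = Sum.map β υ (e (.inl x)) from h (.inl x), ← hstep.iterate_right n,
    hn]
  rfl

theorem comp_equiv {X : Type*} (p : S → X) (q : T → X) (r : U → X)
    (h : ∀ z, Sum.elim q r (e z) = Sum.elim p r z) (x : S) : q (equiv e x) = p x := by
  have hstep : Semiconj (Sum.elim q r) (step e) id := by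
    rintro (y | u)
    · rfl
    · exact h (.inr u)
  obtain ⟨n, hn⟩ := reaches_toFun e x
  have := hstep.iterate_right n (e (.inl x))
  rwa [hn, iterate_id, id, h] at this

end SumCancel

namespace PreSpan

variable {G : Type} [Group G] [TopologicalSpace G] {A B : FinDiscGSet G}

theorem Equiv.refl (s : PreSpan A B) : Equiv s s :=
  ⟨⟨_root_.Equiv.refl _, fun _ _ => rfl⟩, fun _ => rfl, fun _ => rfl⟩

theorem Equiv.symm {s t : PreSpan A B} (h : Equiv s t) : Equiv t s := by
  obtain ⟨⟨e, he⟩, hl, hr⟩ := h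
  refine ⟨⟨e.symm, fun g x => e.symm_apply_eq.mpr ?_⟩, fun x => ?_, fun x => ?_⟩
  · rw [he, e.apply_symm_apply]
  · rw [← hl, e.apply_symm_apply]
  · rw [← hr, e.apply_symm_apply]

theorem Equiv.trans {s t u : PreSpan A B} (h : Equiv s t) (h' : Equiv t u) : Equiv s u := by
  obtain ⟨⟨e, he⟩, hl, hr⟩ := h
  obtain ⟨⟨e', he'⟩, hl', hr'⟩ := h'
  exact ⟨⟨e.trans e', fun g x => by simp only [_root_.Equiv.trans_apply, he, he']⟩,
    fun x => (hl' _).trans (hl x), fun x => (hr' _).trans (hr x)⟩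

theorem Equiv.add {s s' t t' : PreSpan A B} (h : Equiv s s') (h' : Equiv t t') :
    Equiv (s.add t) (s'.add t') := by
  obtain ⟨⟨e, he⟩, hl, hr⟩ := h
  obtain ⟨⟨e', he'⟩, hl', hr'⟩ := h'
  refine ⟨⟨e.sumCongr e', ?_⟩, ?_, ?_⟩
  · rintro g (x | x)
    · exact congrArg Sum.inl (he g x)
    · exact congrArg Sum.inr (he' g x)
  · rintro (x | x)
    · exact hl x
    · exact hl' x
  · rintro (x | x)
    · exact hr x
    · exact hr' x

theorem add_comm_equiv (s t : PreSpan A B) : Equiv (s.add t) (t.add s) :=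
  ⟨⟨_root_.Equiv.sumComm _ _, by rintro g (x | x) <;> rfl⟩, by rintro (x | x) <;> rfl,
    by rintro (x | x) <;> rfl⟩

theorem add_add_add_swap_equiv (p q r s : PreSpan A B) :
    Equiv ((p.add q).add (r.add s)) ((p.add s).add (q.add r)) := by
  refine ⟨⟨⟨fun
      | .inl (.inl x) => .inl (.inl x)
      | .inl (.inr x) => .inr (.inl x)
      | .inr (.inl x) => .inr (.inr x)
      | .inr (.inr x) => .inl (.inr x),
    fun
      | .inl (.inl x) => .inl (.inl x)
      | .inr (.inl x) => .inl (.inr x)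
      | .inr (.inr x) => .inr (.inl x)
      | .inl (.inr x) => .inr (.inr x), ?_, ?_⟩, ?_⟩, ?_, ?_⟩
  all_goals first
    | rintro ((x | x) | (x | x)) <;> rfl
    | rintro g ((x | x) | (x | x)) <;> rfl

theorem Equiv.add_right_cancel {s t u : PreSpan A B} (h : Equiv (s.add u) (t.add u)) :
    Equiv s t := by
  obtain ⟨⟨e, he⟩, hl, hr⟩ := h
  have hsmul (g : G) :
      ∀ z, e (Sum.map (g • ·) (g • ·) z) = Sum.map (g • ·) (g • ·) (e z) := by
    rintro (x | x) <;> exact he g _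
  exact ⟨⟨SumCancel.equiv e, fun g => SumCancel.equiv_map e _ _ _ (hsmul g)⟩,
    SumCancel.comp_equiv e _ _ u.left hl, SumCancel.comp_equiv e _ _ u.right hr⟩

theorem grothRel_iff {p q : PreSpan A B × PreSpan A B} :
    GrothRel A B p q ↔ Equiv (p.1.add q.2) (q.1.add p.2) :=
  ⟨fun ⟨_, hu⟩ => hu.add_right_cancel, fun h => ⟨emptySpan A B, h.add (Equiv.refl _)⟩⟩

theorem grothRel_equivalence : Equivalence (GrothRel A B) where
  refl _ := grothRel_iff.mpr (Equiv.refl _)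
  symm h := grothRel_iff.mpr (grothRel_iff.mp h).symm
  trans {a b c} hab hbc := by
    rw [grothRel_iff] at hab hbc ⊢
    have hsum := hab.add hbc
    have hleft := add_add_add_swap_equiv a.1 b.2 b.1 c.2
    have hright := (add_comm_equiv (b.1.add a.2) (c.1.add b.2)).trans
      (add_add_add_swap_equiv c.1 b.2 b.1 a.2)
    exact (hleft.symm.trans (hsum.trans hright)).add_right_cancel

end PreSpan

theorem SpanHom.mk_eq_mk_iff {G : Type} [Group G] [TopologicalSpace G] {A B : FinDiscGSet G}
    {p q : PreSpan A B × PreSpan A B} :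
    (Quot.mk (GrothRel A B) p = Quot.mk _ q) ↔ GrothRel A B p q :=
  Quot.eq.trans PreSpan.grothRel_equivalence.eqvGen_iff

section Inflation

variable {G : Type} [Group G] [TopologicalSpace G] [IsTopologicalGroup G]
  {A B : FinDiscGSet G} (N : OpenNormalSubgroup G)
  (hA : ∀ n : G, n ∈ N → ∀ a : A.carrier, n • a = a)
  (hB : ∀ n : G, n ∈ N → ∀ b : B.carrier, n • b = b)

theorem PreSpan.inflateSpan_equiv_iff {s t : PreSpan (A.descend N hA) (B.descend N hB)} :
    Equiv (s.inflateSpan N hA hB) (t.inflateSpan N hA hB) ↔ Equiv s t := by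
  refine ⟨fun ⟨⟨e, he⟩, hl, hr⟩ => ⟨⟨e, fun q x => ?_⟩, hl, hr⟩,
    fun ⟨⟨e, he⟩, hl, hr⟩ => ⟨⟨e, fun g => he (QuotientGroup.mk g)⟩, hl, hr⟩⟩
  induction q using QuotientGroup.induction_on with
  | H g => exact he g x

theorem PreSpan.inflateSpan_add (s t : PreSpan (A.descend N hA) (B.descend N hB)) :
    (s.add t).inflateSpan N hA hB = (s.inflateSpan N hA hB).add (t.inflateSpan N hA hB) :=
  rfl

theorem grothRel_inflateSpan_iff {p q : PreSpan (A.descend N hA) (B.descend N hB) ×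
      PreSpan (A.descend N hA) (B.descend N hB)} :
    GrothRel A B (p.1.inflateSpan N hA hB, p.2.inflateSpan N hA hB)
        (q.1.inflateSpan N hA hB, q.2.inflateSpan N hA hB) ↔ GrothRel _ _ p q := by
  simp only [PreSpan.grothRel_iff, ← PreSpan.inflateSpan_add, PreSpan.inflateSpan_equiv_iff]

def SpanHom.inflate : SpanHom (A.descend N hA) (B.descend N hB) → SpanHom A B :=
  Quot.lift (fun p => Quot.mk _ (p.1.inflateSpan N hA hB, p.2.inflateSpan N hA hB))
    fun _ _ h => Quot.sound ((grothRel_inflateSpan_iff N hA hB).mpr h)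

theorem SpanHom.inflate_injective : Function.Injective (SpanHom.inflate N hA hB) := by
  rintro ⟨p⟩ ⟨q⟩ h
  exact Quot.sound ((grothRel_inflateSpan_iff N hA hB).mp (SpanHom.mk_eq_mk_iff.mp h))

def PreSpan.descendSpan (s : PreSpan A B)
    (hs : ∀ n : G, n ∈ N → ∀ x : s.mid.carrier, n • x = x) :
    PreSpan (A.descend N hA) (B.descend N hB) where
  mid := s.mid.descend N hs
  left := s.left
  right := s.right
  left_equivariant q x := Quotient.inductionOn' q fun g => s.left_equivariant g x
  right_equivariant q x := Quotient.inductionOn' q fun g => s.right_equivariant g x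

theorem PreSpan.inflateSpan_descendSpan (s : PreSpan A B)
    (hs : ∀ n : G, n ∈ N → ∀ x : s.mid.carrier, n • x = x) :
    Equiv ((s.descendSpan N hA hB hs).inflateSpan N hA hB) s :=
  Equiv.refl s

end Inflation

def FinDiscGSet.actionKernel {G : Type} [Group G] [TopologicalSpace G] (X : FinDiscGSet G) :
    OpenNormalSubgroup G where
  toSubgroup := (MulAction.toPermHom G X.carrier).ker
  isOpen' := by
    have : ((MulAction.toPermHom G X.carrier).ker : Set G) =
        ⋂ x : X.carrier, (stabilizer G x : Set G) := by
      ext g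
      simp [Equiv.Perm.ext_iff]
    change IsOpen ((MulAction.toPermHom G X.carrier).ker : Set G)
    rw [this]
    exact isOpen_iInter_of_finite X.isOpen_stabilizer

theorem FinDiscGSet.smul_of_mem_actionKernel {G : Type} [Group G] [TopologicalSpace G]
    {X : FinDiscGSet G} {n : G} (h : n ∈ X.actionKernel) (x : X.carrier) : n • x = x :=
  Equiv.Perm.ext_iff.mp (MonoidHom.mem_ker.mp h) x

theorem SpanHom.exists_inflate_eq {G : Type} [Group G] [TopologicalSpace G]
    [IsTopologicalGroup G] {A B : FinDiscGSet G} (h : SpanHom A B) :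
    ∃ N hA hB x, SpanHom.inflate N hA hB x = h := by
  obtain ⟨s, t⟩ := h
  open FinDiscGSet in
  refine ⟨A.actionKernel ⊓ B.actionKernel ⊓ (s.mid.actionKernel ⊓ t.mid.actionKernel),
    fun _ hn => smul_of_mem_actionKernel hn.1.1, fun _ hn => smul_of_mem_actionKernel hn.1.2,
    Quot.mk _ (s.descendSpan _ _ _ fun _ hn => smul_of_mem_actionKernel hn.2.1,
      t.descendSpan _ _ _ fun _ hn => smul_of_mem_actionKernel hn.2.2), ?_⟩
  exact Quot.sound (PreSpan.grothRel_iff.mpr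
    ((s.inflateSpan_descendSpan _ _ _ _).add (t.inflateSpan_descendSpan _ _ _ _).symm))

theorem spanHom_isColimit_of_finite_quotients_general
    (G : Type) [Group G] [TopologicalSpace G] [IsTopologicalGroup G]
    (A B : FinDiscGSet G) :
    ∃ ι : ∀ (N : OpenNormalSubgroup G)
        (hA : ∀ n : G, n ∈ N → ∀ a : A.carrier, n • a = a)
        (hB : ∀ n : G, n ∈ N → ∀ b : B.carrier, n • b = b),
        SpanHom (A.descend N hA) (B.descend N hB) → SpanHom A B,
      (∀ N hA hB (s t : PreSpan (A.descend N hA) (B.descend N hB)),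
        ι N hA hB (Quot.mk _ (s, t)) =
          Quot.mk _ (s.inflateSpan N hA hB, t.inflateSpan N hA hB)) ∧
      (∀ N hA hB, Function.Injective (ι N hA hB)) ∧
      (∀ h : SpanHom A B, ∃ N hA hB x, ι N hA hB x = h) :=
  ⟨SpanHom.inflate, fun _ _ _ _ _ => rfl, SpanHom.inflate_injective,
    SpanHom.exists_inflate_eq⟩

/-- For a profinite group `G` and finite discrete `G`-sets `A` and `B`, the hom set
`Span_G(A,B)` in the Burnside category of `G` is isomorphic to the filtered colimit,
over the open normal subgroups `N` of `G` (acting trivially on `A` and `B`), of the hom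
sets `Span_{G/N}(A,B)` in the Burnside categories of the finite quotients, with the
colimit maps induced by inflation: the inflation maps are injective and jointly
surjective. -/
theorem spanHom_isColimit_of_finite_quotients
    (G : Type) [Group G] [TopologicalSpace G] [IsTopologicalGroup G]
    [CompactSpace G] [T2Space G] [TotallyDisconnectedSpace G]
    (A B : FinDiscGSet G) :
    ∃ ι : ∀ (N : OpenNormalSubgroup G)
        (hA : ∀ n : G, n ∈ N → ∀ a : A.carrier, n • a = a)
        (hB : ∀ n : G, n ∈ N → ∀ b : B.carrier, n • b = b),
        SpanHom (A.descend N hA) (B.descend N hB) → SpanHom A B,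
      (∀ N hA hB (s t : PreSpan (A.descend N hA) (B.descend N hB)),
        ι N hA hB (Quot.mk _ (s, t)) =
          Quot.mk _ (s.inflateSpan N hA hB, t.inflateSpan N hA hB)) ∧
      (∀ N hA hB, Function.Injective (ι N hA hB)) ∧
      (∀ h : SpanHom A B, ∃ N hA hB x, ι N hA hB x = h) :=
  spanHom_isColimit_of_finite_quotients_general G A B
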